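/- arXiv:1905.08706 — 2 statements merged into one kernel-verified Lean document; each statement's English description precedes it below -/
import Mathlib

section
/- Let K be a field. For all elements u, t, w, p ∈ K with u ≠ 0 and t ≠ 0, define P(u,t,w,p) = p^3 + p^2·u·t·w + t^3·((u^3 + u^2)·w^2 + 8·u^2·w + 2·u^2 + 2·u) and Q(u,t,w,p) = u^3·t^3·w^3 + 2·u·t^2 + 2·u^2·t^4 + p·(8·u·t^2 + u^2·t^2·w^2) + p^2·(1 + u·t^2). Then P(u^{-1}·t^{-2}, t, p, w)·u^3·t^3 = Q(u, t, w, p) (note that the third and fourth arguments of P are swapped relative to those of Q). -/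
/-- Verification of the mirror P=W conjecture identity for the intersection of two
quadrics in ℙ⁵ and its mirror Landau–Ginzburg model: with
`P(u,t,w,p) = p^3 + p^2·u·t·w + t^3·((u^3+u^2)·w^2 + 8·u^2·w + 2·u^2 + 2·u)` and
`Q(u,t,w,p) = u^3·t^3·w^3 + 2·u·t^2 + 2·u^2·t^4 + p·(8·u·t^2 + u^2·t^2·w^2) + p^2·(1 + u·t^2)`,
one has `P(u⁻¹·t⁻², t, p, w)·u^3·t^3 = Q(u,t,w,p)` for all `u ≠ 0`, `t ≠ 0`. -/
theorem stmt_0 {K : Type*} [Field K] (u t w p : K) (hu : u ≠ 0) (ht : t ≠ 0)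
    (P Q : K → K → K → K → K)
    (hP : ∀ u t w p : K,
      P u t w p = p ^ 3 + p ^ 2 * u * t * w +
        t ^ 3 * ((u ^ 3 + u ^ 2) * w ^ 2 + 8 * u ^ 2 * w + 2 * u ^ 2 + 2 * u))
    (hQ : ∀ u t w p : K,
      Q u t w p = u ^ 3 * t ^ 3 * w ^ 3 + 2 * u * t ^ 2 + 2 * u ^ 2 * t ^ 4 +
        p * (8 * u * t ^ 2 + u ^ 2 * t ^ 2 * w ^ 2) + p ^ 2 * (1 + u * t ^ 2)) :
    P (u⁻¹ * t⁻¹ ^ 2) t p w * (u ^ 3 * t ^ 3) = Q u t w p := by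
  rw [hP, hQ]
  field_simp
  ring
end

section
/- Let x, y, z ∈ ℂ be nonzero with x ≠ -1 and y ≠ -1. Setting (X, Y, Z, U, V) = ( x/(x+1), 1/(x+1), y/(y+1), 1/(y+1), z ), one has X, Y, Z, U, V all nonzero, X + Y = 1, Z + U = 1, and V + 1/(X·Y·Z·U·V) = (x+1)^2·(y+1)^2/(x·y·z) + z. -/
/-! Both fibres `X + Y = 1` and `Z + U = 1` are parametrized by `a ↦ (a/(a+1), 1/(a+1))`, whose
coordinates multiply to `a/(a+1)²`. Hence `XYZUV = xyz/((x+1)²(y+1)²)`, and inverting it gives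
the Laurent term of the toric potential. -/

section Parametrization

variable {K : Type*} [Field K]

theorem div_add_one_add_one_div_add_one {a : K} (ha : a + 1 ≠ 0) :
    a / (a + 1) + 1 / (a + 1) = 1 := by
  rw [← add_div, div_self ha]

theorem div_add_one_mul_one_div_add_one (a : K) :
    a / (a + 1) * (1 / (a + 1)) = a / (a + 1) ^ 2 := by
  rw [div_mul_div_comm, mul_one, sq]

end Parametrization

/-- Under the explicit birational parametrization of Givental's Landau–Ginzburg model
for the intersection of two quadrics in ℙ⁵, the superpotential `V + 1/(XYZUV)` pulls
back to the toric Landau–Ginzburg potential `(x+1)²(y+1)²/(xyz) + z`. -/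
theorem stmt_3 (x y z X Y Z U V : ℂ)
    (hx : x ≠ 0) (hy : y ≠ 0) (hz : z ≠ 0) (hx1 : x ≠ -1) (hy1 : y ≠ -1)
    (hX : X = x / (x + 1)) (hY : Y = 1 / (x + 1))
    (hZ : Z = y / (y + 1)) (hU : U = 1 / (y + 1)) (hV : V = z) :
    X ≠ 0 ∧ Y ≠ 0 ∧ Z ≠ 0 ∧ U ≠ 0 ∧ V ≠ 0 ∧
      X + Y = 1 ∧ Z + U = 1 ∧
      V + 1 / (X * Y * Z * U * V) = (x + 1) ^ 2 * (y + 1) ^ 2 / (x * y * z) + z := by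
  have hx1' : x + 1 ≠ 0 := fun h => hx1 (eq_neg_of_add_eq_zero_left h)
  have hy1' : y + 1 ≠ 0 := fun h => hy1 (eq_neg_of_add_eq_zero_left h)
  subst X Y Z U V
  have hprod : x / (x + 1) * (1 / (x + 1)) * (y / (y + 1)) * (1 / (y + 1)) * z
      = x * y * z / ((x + 1) ^ 2 * (y + 1) ^ 2) := by
    rw [mul_assoc (x / (x + 1) * _), div_add_one_mul_one_div_add_one,
      div_add_one_mul_one_div_add_one]
    field_simp
  refine ⟨div_ne_zero hx hx1', one_div_ne_zero hx1', div_ne_zero hy hy1',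
    one_div_ne_zero hy1', hz, div_add_one_add_one_div_add_one hx1',
    div_add_one_add_one_div_add_one hy1', ?_⟩
  rw [hprod, one_div_div, add_comm]
end
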